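/- arXiv:2412.20488 — 4 statements merged into one kernel-verified Lean document; each statement's English description precedes it below -/
import Mathlib

section
/- For fixed z in the upper half plane, the sequence G_d(z) := 1/z − (i/z²) · [ (1+i/z)^{d−1} − (1−i/z)^{d−1} ] / [ (1+i/z)^d + (1−i/z)^d ] converges, as d → ∞, to 1/(z+i), the Cauchy transform of the standard Cauchy distribution. -/
open Complex Filter

theorem cauchy_transform_limit (z : ℂ) (hz : 0 < z.im) :
    Filter.Tendsto
      (fun d : ℕ =>
        1 / z - (Complex.I / z ^ 2) *
          (((1 + Complex.I / z) ^ (d - 1) - (1 - Complex.I / z) ^ (d - 1)) /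
            ((1 + Complex.I / z) ^ d + (1 - Complex.I / z) ^ d)))
      Filter.atTop (nhds (1 / (z + Complex.I))) := by
  have hz0 : z ≠ 0 := by
    intro h; rw [h] at hz; simp at hz
  set w : ℂ := Complex.I / z with hw
  have hnsq : 0 < Complex.normSq z := Complex.normSq_pos.mpr hz0
  have hwre : 0 < w.re := by
    have h1 : w.re = z.im / Complex.normSq z := by
      simp [hw, Complex.div_re]
    rw [h1]; positivity
  set a : ℂ := 1 + w with hab
  set b : ℂ := 1 - w with hbb
  have hlt : ‖b‖ < ‖a‖ := by
    have h1 : ‖b‖ ^ 2 < ‖a‖ ^ 2 := by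
      rw [Complex.sq_norm, Complex.sq_norm]
      simp only [hab, hbb, Complex.normSq_apply, Complex.add_re, Complex.add_im,
        Complex.sub_re, Complex.sub_im, Complex.one_re, Complex.one_im]
      nlinarith [hwre]
    exact lt_of_pow_lt_pow_left₀ 2 (norm_nonneg _) h1
  have ha : a ≠ 0 := by
    intro h
    rw [h] at hlt
    simp at hlt
    exact absurd hlt (not_lt.mpr (norm_nonneg b))
  set r : ℂ := b / a with hr
  have hrlt : ‖r‖ < 1 := by
    rw [hr]
    simp only [norm_div]
    rw [div_lt_one (lt_of_le_of_lt (norm_nonneg b) hlt)]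
    exact hlt
  have hbr : ∀ m : ℕ, b ^ m = a ^ m * r ^ m := by
    intro m
    rw [hr, div_pow, mul_div_cancel₀ _ (pow_ne_zero m ha)]
  have hne : ∀ d : ℕ, a ^ d + b ^ d ≠ 0 := by
    intro d
    rw [hbr d, ← mul_one_add]
    refine mul_ne_zero (pow_ne_zero d ha) ?_
    intro h
    have h2 : r ^ d = -1 := by linear_combination h
    rcases Nat.eq_zero_or_pos d with h0 | h0
    · rw [h0, pow_zero] at h2
      exact absurd h2 (by norm_num)
    · have hlt1 : ‖r ^ d‖ < 1 := by
        rw [norm_pow]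
        exact pow_lt_one₀ (norm_nonneg r) hrlt (Nat.pos_iff_ne_zero.mp h0)
      rw [h2] at hlt1; simp at hlt1
  have hzi : z + Complex.I ≠ 0 := by
    intro h
    have := congrArg Complex.im h
    simp at this
    linarith
  -- limit of r ^ (d - 1)
  have h1 : Filter.Tendsto (fun d : ℕ => r ^ (d - 1)) Filter.atTop (nhds 0) :=
    (tendsto_pow_atTop_nhds_zero_of_norm_lt_one hrlt).comp (tendsto_sub_atTop_nat 1)
  have hg : Filter.Tendsto
      (fun d : ℕ => 1 / z - (Complex.I / z ^ 2) * ((1 - r ^ (d - 1)) / (a + b * r ^ (d - 1))))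
      Filter.atTop (nhds (1 / z - (Complex.I / z ^ 2) * ((1 - 0) / (a + b * 0)))) := by
    refine tendsto_const_nhds.sub (Filter.Tendsto.const_mul _ ?_)
    refine Filter.Tendsto.div (tendsto_const_nhds.sub h1)
      (tendsto_const_nhds.add (tendsto_const_nhds.mul h1)) ?_
    simpa using ha
  have hval : 1 / z - (Complex.I / z ^ 2) * ((1 - 0) / (a + b * 0)) = 1 / (z + Complex.I) := by
    rw [mul_zero, add_zero, sub_zero, hab, hw]
    have hI : 1 + Complex.I / z ≠ 0 := by rw [hab, hw] at ha; exact ha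
    field_simp
    ring
  rw [← hval]
  refine hg.congr' ?_
  filter_upwards [Filter.eventually_ge_atTop 1] with d hd
  obtain ⟨m, rfl⟩ := Nat.exists_eq_add_of_le hd
  have hdm : 1 + m - 1 = m := by omega
  rw [hdm]
  have key : (a + b * r ^ m) * a ^ m = a ^ (1 + m) + b ^ (1 + m) := by
    calc (a + b * r ^ m) * a ^ m = a * a ^ m + b * (a ^ m * r ^ m) := by ring
      _ = a ^ (1 + m) + b * b ^ m := by rw [← hbr m, pow_add, pow_one]
      _ = a ^ (1 + m) + b ^ (1 + m) := by rw [pow_add b, pow_one]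
  have hne2 : a + b * r ^ m ≠ 0 := by
    intro h
    apply hne (1 + m)
    rw [← key, h, zero_mul]
  have hnum : a ^ m - b ^ m = (1 - r ^ m) * a ^ m := by
    rw [hbr m]; ring
  have hfrac : (1 - r ^ m) / (a + b * r ^ m) =
      (a ^ m - b ^ m) / (a ^ (1 + m) + b ^ (1 + m)) := by
    rw [hnum, ← key, mul_div_mul_right _ _ (pow_ne_zero m ha)]
  rw [hfrac]
end

section
/- Let p(x) = x^d + Σ_{k=1}^d (−1)^k a_k x^{d−k} and write (1/((d)_j (n+d)_j)) M_n^j p(x) = x^{d−j} + Σ_{k=1}^{d−j} (−1)^k a_k^{(j)} x^{d−j−k}. Then for 1 ≤ k ≤ d−j, a_k^{(j)} / ((d−j)_k (n+d−j)_k) = a_k / ((d)_k (n+d)_k). -/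
open Polynomial Finset

/-- Falling factorial `(x)_j = x (x-1) ⋯ (x-j+1)` for a real `x`. -/
noncomputable def ffall (x : ℝ) (j : ℕ) : ℝ := ∏ i ∈ Finset.range j, (x - i)

/-- The differential operator `M_n = x D² + (n+1) D` on real polynomials. -/
noncomputable def Mn (n : ℝ) (p : Polynomial ℝ) : Polynomial ℝ :=
  Polynomial.X * Polynomial.derivative (Polynomial.derivative p)
    + Polynomial.C (n + 1) * Polynomial.derivative p

lemma ffall_succ (x : ℝ) (j : ℕ) : ffall x (j+1) = ffall x j * (x - j) :=
  Finset.prod_range_succ _ j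

lemma ffall_add (x : ℝ) (j k : ℕ) : ffall x (j+k) = ffall x j * ffall (x - j) k := by
  unfold ffall
  rw [Finset.prod_range_add]
  congr 1
  refine Finset.prod_congr rfl fun i _ => ?_
  push_cast; ring

lemma ffall_ne_zero {x : ℝ} {j : ℕ} (h : (j:ℝ) - 1 < x) : ffall x j ≠ 0 := by
  unfold ffall
  refine Finset.prod_ne_zero_iff.2 fun i hi => ?_
  have hi' : (i:ℝ) + 1 ≤ j := by exact_mod_cast Finset.mem_range.1 hi
  have : (0:ℝ) < x - i := by linarith
  linarith

lemma ffall_nat_eq_zero {m j : ℕ} (h : m < j) : ffall (m:ℝ) j = 0 :=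
  Finset.prod_eq_zero (Finset.mem_range.2 h) (by simp)

lemma Mn_add (n : ℝ) (p q : Polynomial ℝ) : Mn n (p + q) = Mn n p + Mn n q := by
  simp only [Mn, derivative_add]; ring

lemma Mn_iter_add (n : ℝ) (j : ℕ) (p q : Polynomial ℝ) :
    (Mn n)^[j] (p + q) = (Mn n)^[j] p + (Mn n)^[j] q := by
  induction j generalizing p q with
  | zero => rfl
  | succ j ih => simp [Function.iterate_succ_apply, Mn_add, ih]

lemma Mn_C_mul_X_pow (n c : ℝ) (r : ℕ) :
    Mn n (C c * X^r) = C (c * (r * (n + r))) * X^(r-1) := by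
  match r with
  | 0 => simp [Mn]
  | 1 => simp [Mn]; ring
  | (s+2) =>
    have h2 : s + 2 - 1 = s + 1 := rfl
    have h1 : s + 1 - 1 = s := rfl
    simp only [Mn, derivative_C_mul, derivative_X_pow, h2, h1]
    have e1 : (X:ℝ[X]) * (C c * (C ((s+2:ℕ):ℝ) * (C ((s+1:ℕ):ℝ) * X^s)))
        = C (c * (((s+2:ℕ):ℝ) * ((s+1:ℕ):ℝ))) * X^(s+1) := by
      rw [C_mul, C_mul, pow_succ]; ring
    have e2 : C (n+1) * (C c * (C ((s+2:ℕ):ℝ) * X^(s+1)))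
        = C ((n+1) * (c * ((s+2:ℕ):ℝ))) * X^(s+1) := by
      rw [C_mul, C_mul]; ring
    rw [e1, e2, ← add_mul, ← C_add]
    congr 1
    push_cast
    ring

lemma Mn_iter_C_mul_X_pow (n c : ℝ) (m j : ℕ) :
    (Mn n)^[j] (C c * X^m) = C (c * ffall (m:ℝ) j * ffall (n+m) j) * X^(m-j) := by
  induction j with
  | zero => simp [ffall]
  | succ j ih =>
    rw [Function.iterate_succ_apply', ih, Mn_C_mul_X_pow, Nat.sub_sub,
      ffall_succ, ffall_succ]
    rcases le_or_gt j m with h | h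
    · have hc : ((m - j : ℕ):ℝ) = (m:ℝ) - j := by push_cast [h]; ring
      rw [hc]; congr 1; ring
    · rw [ffall_nat_eq_zero h]; ring_nf

lemma Mn_iter_sum (n : ℝ) (j : ℕ) (s : Finset ℕ) (f : ℕ → Polynomial ℝ) :
    (Mn n)^[j] (∑ i ∈ s, f i) = ∑ i ∈ s, (Mn n)^[j] (f i) := by
  classical
  induction s using Finset.induction with
  | empty =>
    simp only [Finset.sum_empty]
    induction j with
    | zero => rfl
    | succ j ih => rw [Function.iterate_succ_apply, show Mn n 0 = 0 by simp [Mn], ih]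
  | insert a s h ih =>
    rw [Finset.sum_insert h, Finset.sum_insert h, Mn_iter_add, ih]


theorem Mn_iterates_coefficient_relation (n : ℝ) (hn : -1 < n) (d j : ℕ) (hj : j ≤ d)
    (a : ℕ → ℝ)
    (p : Polynomial ℝ)
    (hp : p = Polynomial.X ^ d + ∑ k ∈ Finset.Icc 1 d,
        Polynomial.C ((-1 : ℝ) ^ k * a k) * Polynomial.X ^ (d - k))
    (pj : Polynomial ℝ)
    (hpj : pj = Polynomial.C (1 / (ffall (d : ℝ) j * ffall (n + d) j)) * (Mn n)^[j] p)
    (aj : ℕ → ℝ)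
    (haj : ∀ k, 1 ≤ k → k ≤ d - j → aj k = (-1 : ℝ) ^ k * pj.coeff (d - j - k)) :
    ∀ k, 1 ≤ k → k ≤ d - j →
      aj k / (ffall ((d : ℝ) - j) k * ffall (n + d - j) k)
        = a k / (ffall (d : ℝ) k * ffall (n + d) k) := by
  intro k hk1 hk2
  have hkj : k + j ≤ d := by omega
  -- coefficient of the j-th iterate
  have hcoeff : pj.coeff (d - j - k)
      = (1 / (ffall (d : ℝ) j * ffall (n + d) j)) *
        (((-1:ℝ)^k * a k) * ffall ((d - k : ℕ) : ℝ) j * ffall (n + ((d - k : ℕ) : ℝ)) j) := by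
    rw [hpj, hp, show (X:ℝ[X])^d = C (1:ℝ) * X^d by rw [C_1, one_mul],
      Mn_iter_add, Mn_iter_sum]
    simp only [Mn_iter_C_mul_X_pow]
    rw [coeff_C_mul, coeff_add, coeff_C_mul, coeff_X_pow, finset_sum_coeff]
    simp only [coeff_C_mul, coeff_X_pow]
    rw [Finset.sum_eq_single k]
    · rw [if_neg (by omega), if_pos (by omega)]
      ring
    · intro b hb hbk
      simp only [Finset.mem_Icc] at hb
      by_cases he : d - j - k = d - b - j
      · have hbj : d - b < j := by omega
        rw [ffall_nat_eq_zero hbj]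
        ring
      · rw [if_neg he, mul_zero]
    · intro hk
      exact absurd (Finset.mem_Icc.2 ⟨hk1, by omega⟩) hk
  have haj' := haj k hk1 hk2
  -- nonvanishing
  have hA : ffall (d : ℝ) j ≠ 0 := ffall_ne_zero (by
    have : (j:ℝ) ≤ d := by exact_mod_cast hj
    linarith)
  have hB : ffall (n + d) j ≠ 0 := ffall_ne_zero (by
    have : (j:ℝ) ≤ d := by exact_mod_cast hj
    linarith)
  have hkd : (k:ℝ) + j ≤ d := by exact_mod_cast hkj
  have hC : ffall (d : ℝ) k ≠ 0 := ffall_ne_zero (by linarith [Nat.cast_nonneg (α := ℝ) j])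
  have hD : ffall (n + d) k ≠ 0 := ffall_ne_zero (by linarith [Nat.cast_nonneg (α := ℝ) j])
  have hE : ffall ((d : ℝ) - j) k ≠ 0 := ffall_ne_zero (by linarith)
  have hF : ffall (n + d - j) k ≠ 0 := ffall_ne_zero (by linarith)
  -- falling factorial identities
  have hcast : ((d - k : ℕ) : ℝ) = (d:ℝ) - k := by
    have : k ≤ d := by omega
    push_cast [this]; ring
  have i1 : ffall (d:ℝ) j * ffall ((d:ℝ) - j) k = ffall (d:ℝ) k * ffall ((d:ℝ) - k) j := by
    rw [← ffall_add, ← ffall_add, Nat.add_comm]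
  have i2 : ffall (n + d) j * ffall (n + (d:ℝ) - j) k
      = ffall (n + d) k * ffall (n + (d:ℝ) - k) j := by
    have := ffall_add (n + d) j k
    have h2 := ffall_add (n + d) k j
    rw [Nat.add_comm] at h2
    rw [show n + (d:ℝ) - j = n + d - (j:ℝ) by ring, show n + (d:ℝ) - k = n + d - (k:ℝ) by ring,
      ← this, ← h2]
  rw [haj', hcoeff, hcast, show n + ((d:ℝ) - k) = n + d - (k:ℝ) by ring]
  have hpow : (-1:ℝ)^k * (-1:ℝ)^k = 1 := by
    rw [← mul_pow]; norm_num
  field_simp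
  linear_combination
    (a k * ffall ((d:ℝ) - k) j * ffall (n + (d:ℝ) - k) j * ffall (d:ℝ) k * ffall (n + (d:ℝ)) k) * hpow
    - (a k * (ffall (n + (d:ℝ)) j * ffall (n + (d:ℝ) - j) k)) * i1
    - (a k * (ffall (d:ℝ) k * ffall ((d:ℝ) - k) j)) * i2
end

section
/- For the rectangular finite free convolution with n ∈ ℕ: if p(x) = P(M_n) x^d and q(x) = Q(M_n) x^d for polynomials P, Q, then p ⊞_{d,n} q = P(M_n) Q(M_n) x^d, where ⊞_{d,n} is defined coefficientwise by (p ⊞_{d,n} q)(x) = x^d + Σ_{k=1}^d (−1)^k x^{d−k} Σ_{i+j=k} [(d−i)!(d−j)!/(d!(d−k)!)] · [(n+d−i)!(n+d−j)!/((n+d)!(n+d−k)!)] a_i b_j. -/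
open Polynomial Finset

/-- The coefficient sequence `a_k = (-1)^k ⬝ (coefficient of x^{d-k})`. -/
noncomputable def coeffSeq (d : ℕ) (p : Polynomial ℝ) (k : ℕ) : ℝ :=
  (-1 : ℝ) ^ k * p.coeff (d - k)

/-- The rectangular finite free additive convolution `p ⊞_{d,n} q` for `n ∈ ℕ`. -/
noncomputable def rectFinFreeConv (d n : ℕ) (p q : Polynomial ℝ) : Polynomial ℝ :=
  Polynomial.X ^ d + ∑ k ∈ Finset.Icc 1 d,
    Polynomial.C ((-1 : ℝ) ^ k *
      ∑ i ∈ Finset.range (k + 1),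
        (((d - i).factorial : ℝ) * ((d - (k - i)).factorial : ℝ) /
          ((d.factorial : ℝ) * ((d - k).factorial : ℝ))) *
        (((n + d - i).factorial : ℝ) * ((n + d - (k - i)).factorial : ℝ) /
          (((n + d).factorial : ℝ) * ((n + d - k).factorial : ℝ))) *
          coeffSeq d p i * coeffSeq d q (k - i)) * Polynomial.X ^ (d - k)

/-- Apply the operator polynomial `Q(M_n)` to a polynomial `p`. -/
noncomputable def appM (n : ℝ) (Q p : Polynomial ℝ) : Polynomial ℝ :=
  ∑ k ∈ Finset.range (Q.natDegree + 1),
    Polynomial.C (Q.coeff k) * (Mn n)^[k] p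

lemma Mn_C (ν a : ℝ) : Mn ν (C a) = 0 := by
  simp [Mn]

lemma Mn_C_X (ν a : ℝ) (m : ℕ) :
    Mn ν (C a * X ^ (m + 1)) = C (a * (m + 1) * ((m : ℝ) + 1 + ν)) * X ^ m := by
  cases m with
  | zero => simp [Mn]; ring
  | succ m =>
    simp only [Mn, derivative_C_mul, derivative_X_pow, Nat.add_sub_cancel]
    push_cast
    simp only [C_add, C_mul, C_pow, C_1, map_ofNat]
    ring

lemma iter_Mn (n d k : ℕ) :
    (Mn (n : ℝ))^[k] (X ^ d : Polynomial ℝ) =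
      C ((d.descFactorial k : ℝ) * ((n + d).descFactorial k : ℝ)) * X ^ (d - k) := by
  induction k with
  | zero => simp
  | succ k ih =>
    rw [Function.iterate_succ_apply', ih]
    rcases Nat.lt_or_ge k d with h | h
    · obtain ⟨m, hm⟩ : ∃ m, d - k = m + 1 := ⟨d - k - 1, by omega⟩
      rw [hm, Mn_C_X]
      have h1 : d - (k + 1) = m := by omega
      rw [h1, Nat.descFactorial_succ, Nat.descFactorial_succ]
      have h2 : (n + d) - k = n + m + 1 := by omega
      rw [hm, h2]
      push_cast
      ring
    · have h1 : d - k = 0 := by omega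
      have h2 : d.descFactorial (k+1) = 0 := Nat.descFactorial_eq_zero_iff_lt.mpr (by omega)
      rw [h1, h2, pow_zero, mul_one, Mn_C]
      simp

noncomputable def cc (n d k : ℕ) : ℝ :=
  (d.descFactorial k : ℝ) * ((n + d).descFactorial k : ℝ)

lemma appM_eq (n d N : ℕ) (P : Polynomial ℝ) (h : P.natDegree ≤ N) :
    appM (n : ℝ) P (X ^ d) =
      ∑ k ∈ range (N + 1), C (P.coeff k * cc n d k) * X ^ (d - k) := by
  rw [appM]
  have hsub : Finset.range (P.natDegree + 1) ⊆ Finset.range (N + 1) :=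
    Finset.range_subset_range.mpr (by omega)
  have hz : ∀ k ∈ Finset.range (N + 1), k ∉ Finset.range (P.natDegree + 1) →
      C (P.coeff k) * (Mn (n : ℝ))^[k] (X ^ d) = 0 := by
    intro k _ hk
    have hk' : P.natDegree < k := by
      by_contra hc
      exact hk (Finset.mem_range.mpr (by omega))
    simp [Polynomial.coeff_eq_zero_of_natDegree_lt hk']
  rw [Finset.sum_subset hsub hz]
  refine Finset.sum_congr rfl fun k _ => ?_
  rw [iter_Mn, cc, ← mul_assoc, ← C_mul]

lemma coeff_sum_form (d : ℕ) (f : ℕ → ℝ) (i : ℕ) (hi : i ≤ d) :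
    (∑ k ∈ range (d + 1), C (f k) * X ^ (d - k)).coeff (d - i) = f i := by
  rw [Polynomial.finset_sum_coeff]
  rw [Finset.sum_eq_single i]
  · simp [coeff_C_mul, coeff_X_pow]
  · intro k hk hki
    simp only [coeff_C_mul, coeff_X_pow]
    have : ¬ (d - i = d - k) := by simp at hk; omega
    simp [this]
  · intro h; exact absurd (by simp; omega) h

lemma ratio_id (m i k : ℕ) (hik : i ≤ k) (hkm : k ≤ m) :
    (((m - i).factorial : ℝ) * ((m - (k - i)).factorial : ℝ) /
      ((m.factorial : ℝ) * ((m - k).factorial : ℝ))) *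
      (m.descFactorial i : ℝ) * (m.descFactorial (k - i) : ℝ) =
      (m.descFactorial k : ℝ) := by
  have h1 : ((m - i).factorial : ℝ) * (m.descFactorial i : ℝ) = (m.factorial : ℝ) := by
    exact_mod_cast congrArg (Nat.cast : ℕ → ℝ)
      (Nat.factorial_mul_descFactorial (show i ≤ m by omega))
  have h2 : ((m - (k - i)).factorial : ℝ) * (m.descFactorial (k - i) : ℝ)
      = (m.factorial : ℝ) := by
    exact_mod_cast congrArg (Nat.cast : ℕ → ℝ)
      (Nat.factorial_mul_descFactorial (show k - i ≤ m by omega))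
  have h3 : ((m - k).factorial : ℝ) * (m.descFactorial k : ℝ) = (m.factorial : ℝ) := by
    exact_mod_cast congrArg (Nat.cast : ℕ → ℝ)
      (Nat.factorial_mul_descFactorial hkm)
  have hF : (m.factorial : ℝ) ≠ 0 := Nat.cast_ne_zero.mpr m.factorial_ne_zero
  have hC : ((m - k).factorial : ℝ) ≠ 0 := Nat.cast_ne_zero.mpr (m - k).factorial_ne_zero
  field_simp
  nlinarith [h1, h2, h3, sq_nonneg ((m.factorial : ℝ))]

theorem rectFinFreeConv_eq_operator_product (d n : ℕ) (hd : 0 < d)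
    (p q : Polynomial ℝ) (hp : p.Monic) (hq : q.Monic)
    (hpd : p.natDegree = d) (hqd : q.natDegree = d)
    (P Q : Polynomial ℝ) (hPdeg : P.natDegree ≤ d) (hQdeg : Q.natDegree ≤ d)
    (hP : appM (n : ℝ) P (Polynomial.X ^ d) = p)
    (hQ : appM (n : ℝ) Q (Polynomial.X ^ d) = q) :
    rectFinFreeConv d n p q = appM (n : ℝ) (P * Q) (Polynomial.X ^ d) := by
  have hA : ∀ i ≤ d, p.coeff (d - i) = P.coeff i * cc n d i := fun i hi => by
    rw [← hP, appM_eq n d d P hPdeg, coeff_sum_form d _ i hi]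
  have hB : ∀ i ≤ d, q.coeff (d - i) = Q.coeff i * cc n d i := fun i hi => by
    rw [← hQ, appM_eq n d d Q hQdeg, coeff_sum_form d _ i hi]
  have hP0 : P.coeff 0 = 1 := by
    have := hA 0 (by omega)
    simp [cc] at this
    rw [← this, ← hpd]; exact hp.coeff_natDegree
  have hQ0 : Q.coeff 0 = 1 := by
    have := hB 0 (by omega)
    simp [cc] at this
    rw [← this, ← hqd]; exact hq.coeff_natDegree
  -- RHS as a range (d+1) sum
  have hPQdeg : (P * Q).natDegree ≤ 2 * d :=
    le_trans (Polynomial.natDegree_mul_le) (by omega)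
  rw [appM_eq n d (2 * d) (P * Q) hPQdeg]
  have hsub : Finset.range (d + 1) ⊆ Finset.range (2 * d + 1) :=
    Finset.range_subset_range.mpr (by omega)
  have hz : ∀ k ∈ Finset.range (2 * d + 1), k ∉ Finset.range (d + 1) →
      C ((P * Q).coeff k * cc n d k) * X ^ (d - k) = 0 := by
    intro k _ hk
    have : d < k := by
      by_contra hc; exact hk (Finset.mem_range.mpr (by omega))
    have : d.descFactorial k = 0 := Nat.descFactorial_eq_zero_iff_lt.mpr this
    simp [cc, this]
  rw [← Finset.sum_subset hsub hz]
  -- LHS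
  rw [rectFinFreeConv]
  have hins : Finset.range (d + 1) = insert 0 (Finset.Icc 1 d) := by
    ext x; simp; omega
  rw [hins, Finset.sum_insert (by simp)]
  congr 1
  · have h0 : (P * Q).coeff 0 = 1 := by
      rw [Polynomial.mul_coeff_zero, hP0, hQ0, mul_one]
    simp [h0, cc]
  · refine Finset.sum_congr rfl fun k hk => ?_
    obtain ⟨hk1, hkd⟩ : 1 ≤ k ∧ k ≤ d := by simpa using hk
    congr 1
    rw [Polynomial.coeff_mul, Finset.Nat.sum_antidiagonal_eq_sum_range_succ_mk,
      Finset.sum_mul, Finset.mul_sum]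
    refine congrArg C (Finset.sum_congr rfl fun i hi => ?_)
    have hik : i ≤ k := by simpa [Nat.lt_succ_iff] using hi
    rw [coeffSeq, coeffSeq, hA i (by omega), hB (k - i) (by omega)]
    have e1 := ratio_id d i k hik hkd
    have e2 := ratio_id (n + d) i k hik (by omega)
    have e3 : (-1 : ℝ) ^ k * ((-1 : ℝ) ^ i * (-1 : ℝ) ^ (k - i)) = 1 := by
      rw [← pow_add, show i + (k - i) = k by omega, ← mul_pow]
      norm_num
    rw [cc, cc, cc]
    set Rd : ℝ := ((d - i).factorial : ℝ) * ((d - (k - i)).factorial : ℝ) /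
      ((d.factorial : ℝ) * ((d - k).factorial : ℝ)) with hRd
    set Rn : ℝ := ((n + d - i).factorial : ℝ) * ((n + d - (k - i)).factorial : ℝ) /
      (((n + d).factorial : ℝ) * ((n + d - k).factorial : ℝ)) with hRn
    linear_combination (P.coeff i * Q.coeff (k - i) *
        (Rd * (d.descFactorial i : ℝ) * (d.descFactorial (k - i) : ℝ)) *
        (Rn * ((n + d).descFactorial i : ℝ) * ((n + d).descFactorial (k - i) : ℝ))) * e3 +
      (P.coeff i * Q.coeff (k - i) * (d.descFactorial k : ℝ)) * e2 +
      (P.coeff i * Q.coeff (k - i) *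
        (Rn * ((n + d).descFactorial i : ℝ) * ((n + d).descFactorial (k - i) : ℝ))) * e1
end

section
/- For the finite free additive convolution ⊞_d: if p(x) = P̂(D) x^d and q(x) = Q̂(D) x^d, then (p ⊞_d q)(x) = P̂(D) Q̂(D) x^d, where (p ⊞_d q)(x) := x^d + Σ_{k=1}^d (−1)^k x^{d−k} Σ_{i+j=k} [(d−i)!(d−j)!/(d!(d−k)!)] a_i b_j. -/
open Polynomial Finset

/-- The finite free additive convolution `p ⊞_d q`. -/
noncomputable def finFreeConv (d : ℕ) (p q : Polynomial ℝ) : Polynomial ℝ :=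
  Polynomial.X ^ d + ∑ k ∈ Finset.Icc 1 d,
    Polynomial.C ((-1 : ℝ) ^ k *
      ∑ i ∈ Finset.range (k + 1),
        (((d - i).factorial : ℝ) * ((d - (k - i)).factorial : ℝ) /
          ((d.factorial : ℝ) * ((d - k).factorial : ℝ))) *
          coeffSeq d p i * coeffSeq d q (k - i)) * Polynomial.X ^ (d - k)

/-- Apply the differential-operator polynomial `Q(D)` to a polynomial `p`. -/
noncomputable def appD (Q p : Polynomial ℝ) : Polynomial ℝ :=
  ∑ k ∈ Finset.range (Q.natDegree + 1),
    Polynomial.C (Q.coeff k) * Polynomial.derivative^[k] p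

lemma appD_eq (R : Polynomial ℝ) (d N : ℕ) (hN : R.natDegree ≤ N) :
    appD R (Polynomial.X ^ d)
      = ∑ k ∈ Finset.range (N + 1),
          Polynomial.C (R.coeff k * (d.descFactorial k : ℝ)) * Polynomial.X ^ (d - k) := by
  unfold appD
  rw [Finset.sum_subset (Finset.range_subset_range.2 (Nat.succ_le_succ hN))]
  · refine Finset.sum_congr rfl fun k _ => ?_
    rw [Polynomial.iterate_derivative_X_pow_eq_C_mul, ← mul_assoc, ← map_mul]
  · intro k _ hk
    rw [Polynomial.coeff_eq_zero_of_natDegree_lt (by simpa using hk), map_zero, zero_mul]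

lemma coeff_of_appD (R : Polynomial ℝ) (d : ℕ) (hN : R.natDegree ≤ d) (k : ℕ) (hk : k ≤ d) :
    (appD R (Polynomial.X ^ d)).coeff (d - k) = R.coeff k * (d.descFactorial k : ℝ) := by
  rw [appD_eq R d d hN, Polynomial.finset_sum_coeff]
  rw [Finset.sum_eq_single_of_mem k (Finset.mem_range.2 (Nat.lt_succ_of_le hk))]
  · simp [← Polynomial.C_eq_natCast, ← map_mul, Polynomial.coeff_C_mul, Polynomial.coeff_X_pow]
  · intro j hj hjk
    have hjd : j ≤ d := Nat.lt_succ_iff.1 (Finset.mem_range.1 hj)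
    have : d - k ≠ d - j := fun h => hjk (by omega)
    simp [← Polynomial.C_eq_natCast, ← map_mul, Polynomial.coeff_C_mul, Polynomial.coeff_X_pow, this]

lemma appD_eq' (R : Polynomial ℝ) (d : ℕ) (hN : R.natDegree ≤ d + d) :
    appD R (Polynomial.X ^ d)
      = ∑ k ∈ Finset.range (d + 1),
          Polynomial.C (R.coeff k * (d.descFactorial k : ℝ)) * Polynomial.X ^ (d - k) := by
  rw [appD_eq R d (d + d) hN]
  refine (Finset.sum_subset (Finset.range_subset_range.2 (by omega)) ?_).symm
  intro m _ hm
  have hdm : d < m := by simpa using hm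
  rw [Nat.descFactorial_of_lt hdm]
  simp

lemma desc_cast (d i : ℕ) (h : i ≤ d) :
    (d.descFactorial i : ℝ) = (d.factorial : ℝ) / ((d - i).factorial : ℝ) := by
  rw [eq_div_iff (by positivity)]
  exact_mod_cast (mul_comm _ _).trans (Nat.factorial_mul_descFactorial h)

lemma key (d k : ℕ) (hk : k ≤ d) (p q P Q : Polynomial ℝ)
    (hPc : ∀ i ≤ d, P.coeff i * (d.descFactorial i : ℝ) = p.coeff (d - i))
    (hQc : ∀ i ≤ d, Q.coeff i * (d.descFactorial i : ℝ) = q.coeff (d - i)) :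
    (-1 : ℝ) ^ k *
      ∑ i ∈ Finset.range (k + 1),
        (((d - i).factorial : ℝ) * ((d - (k - i)).factorial : ℝ) /
          ((d.factorial : ℝ) * ((d - k).factorial : ℝ))) *
          coeffSeq d p i * coeffSeq d q (k - i)
    = (P * Q).coeff k * (d.descFactorial k : ℝ) := by
  rw [Polynomial.coeff_mul, Finset.Nat.sum_antidiagonal_eq_sum_range_succ_mk,
    Finset.sum_mul, Finset.mul_sum]
  refine Finset.sum_congr rfl fun i hi => ?_
  have hik : i ≤ k := Nat.lt_succ_iff.1 (Finset.mem_range.1 hi)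
  have hid : i ≤ d := le_trans hik hk
  have hjd : k - i ≤ d := le_trans (Nat.sub_le _ _) hk
  dsimp only
  rw [coeffSeq, coeffSeq, ← hPc i hid, ← hQc (k - i) hjd,
    desc_cast d i hid, desc_cast d (k - i) hjd, desc_cast d k hk]
  have hsign : (-1 : ℝ) ^ k * ((-1) ^ i * (-1) ^ (k - i)) = 1 := by
    rw [← pow_add, Nat.add_sub_cancel' hik, ← pow_add]
    exact Even.neg_one_pow ⟨k, rfl⟩
  have h1 : ((d - i).factorial : ℝ) ≠ 0 := by positivity
  have h2 : ((d - (k - i)).factorial : ℝ) ≠ 0 := by positivity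
  have h3 : ((d - k).factorial : ℝ) ≠ 0 := by positivity
  have h4 : ((d).factorial : ℝ) ≠ 0 := by positivity
  field_simp
  linear_combination (P.coeff i * Q.coeff (k - i)) * hsign

theorem finFreeConv_eq_operator_product (d : ℕ) (hd : 0 < d)
    (p q : Polynomial ℝ) (hp : p.Monic) (hq : q.Monic)
    (hpd : p.natDegree = d) (hqd : q.natDegree = d)
    (P Q : Polynomial ℝ) (hPdeg : P.natDegree ≤ d) (hQdeg : Q.natDegree ≤ d)
    (hP : appD P (Polynomial.X ^ d) = p) (hQ : appD Q (Polynomial.X ^ d) = q) :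
    finFreeConv d p q = appD (P * Q) (Polynomial.X ^ d) := by
  have hPQdeg : (P * Q).natDegree ≤ d + d :=
    le_trans Polynomial.natDegree_mul_le (add_le_add hPdeg hQdeg)
  have hPc : ∀ i ≤ d, P.coeff i * (d.descFactorial i : ℝ) = p.coeff (d - i) := fun i hi => by
    rw [← coeff_of_appD P d hPdeg i hi, hP]
  have hQc : ∀ i ≤ d, Q.coeff i * (d.descFactorial i : ℝ) = q.coeff (d - i) := fun i hi => by
    rw [← coeff_of_appD Q d hQdeg i hi, hQ]
  have hP0 : P.coeff 0 = 1 := by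
    have h := hPc 0 (Nat.zero_le d)
    have hpc : p.coeff d = 1 := hpd ▸ hp.coeff_natDegree
    simpa [hpc] using h
  have hQ0 : Q.coeff 0 = 1 := by
    have h := hQc 0 (Nat.zero_le d)
    have hqc : q.coeff d = 1 := hqd ▸ hq.coeff_natDegree
    simpa [hqc] using h
  have hins : Finset.range (d + 1) = insert 0 (Finset.Icc 1 d) := by
    ext x; simp; omega
  rw [appD_eq' (P * Q) d hPQdeg, hins, Finset.sum_insert (by simp)]
  unfold finFreeConv
  congr 1
  · rw [Polynomial.mul_coeff_zero, hP0, hQ0]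
    simp
  · refine Finset.sum_congr rfl fun k hk => ?_
    obtain ⟨hk1, hkd⟩ := Finset.mem_Icc.1 hk
    rw [key d k hkd p q P Q hPc hQc]
end
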